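/- Let x > 1 be a real number that is not an integer, and let σ ≥ 1, ε ∈ (0,1), T > 1. Suppose Λ' : ℕ → ℂ satisfies |Λ'(n)| ≤ n^{σ-1+ε/2} for all n ≥ 1. Then ∑_{n ≥ 1, n ≠ x} |Λ'(n)| (x/n)^{σ+ε} min{T, |log(x/n)|^{-1}} ≪ x^{σ+ε} + x^{σ+ε/2} min{T/x, 1/‖x‖}, where ‖x‖ denotes the distance from x to the nearest integer, and the implied constant depends only on σ and ε. -/

import Mathlib

open Finset

/-- Distance from a real number to the nearest integer. -/
noncomputable def distNearestInt (x : ℝ) : ℝ := |x - (round x : ℝ)|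

/-!
The hypothesis on `Λ'` bounds the `n`-th term by `x^(σ+ε) n^(-p) min(T, |log(x/n)|⁻¹)` with
`p = 1 + ε/2 > 1`, and `|log(x/n)| ≥ |x - n| / max(x, n)`. For `n ≤ x/2` or `n ≥ 2x` the
logarithmic weight is at most `2`, leaving `2 x^(σ+ε) ∑ n^(-p)`. For the integer `r` nearest to
`x` the weight is at most `2x min(T/x, 1/‖x‖)`, and `r^(-p) ≤ 2^p x^(-p)` turns this into the
second term of the bound. Every other `n ∈ (x/2, 2x)` has weight at most `4x / |n - r|`, and since
`|n - r| ≤ 2x` we may trade `1 / |n - r|` for `(2x)^(p-1) |n - r|^(-p)`, which is summable in `n`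
uniformly in `r`.
-/

open Real

lemma exists_nat_distNearestInt_eq {x : ℝ} (hx : 0 ≤ x) : ∃ r : ℕ, distNearestInt x = |x - r| := by
  have hround : 0 ≤ round x := by
    rw [round_eq]
    exact Int.floor_nonneg.mpr (by linarith)
  lift round x to ℕ using hround with r hr
  exact ⟨r, by rw [distNearestInt, ← hr, Int.cast_natCast]⟩

lemma abs_sub_div_max_le_abs_log_div {a b : ℝ} (ha : 0 < a) (hb : 0 < b) :
    |a - b| / max a b ≤ |log (a / b)| := by
  rcases le_total b a with hba | hab
  · have h := one_sub_inv_le_log_of_pos (div_pos ha hb)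
    rw [max_eq_left hba, abs_of_nonneg (sub_nonneg.mpr hba)]
    calc (a - b) / a = 1 - (a / b)⁻¹ := by field_simp
      _ ≤ |log (a / b)| := h.trans (le_abs_self _)
  · have h := one_sub_inv_le_log_of_pos (div_pos hb ha)
    rw [max_eq_right hab, abs_sub_comm, abs_of_nonneg (sub_nonneg.mpr hab),
      ← abs_neg, ← log_inv, inv_div]
    calc (b - a) / b = 1 - (b / a)⁻¹ := by field_simp
      _ ≤ |log (b / a)| := h.trans (le_abs_self _)

lemma inv_abs_log_div_le {a b : ℝ} (ha : 0 < a) (hb : 0 < b) :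
    |log (a / b)|⁻¹ ≤ max a b / |a - b| := by
  rcases eq_or_ne a b with rfl | hne
  · simp
  have hpos : 0 < |a - b| / max a b :=
    div_pos (abs_pos.mpr (sub_ne_zero.mpr hne)) (lt_max_of_lt_left ha)
  simpa only [inv_div] using inv_anti₀ hpos (abs_sub_div_max_le_abs_log_div ha hb)

lemma inv_abs_log_div_le_two {a b : ℝ} (ha : 0 < a) (hb : 0 < b) (hab : 2 * b ≤ a ∨ 2 * a ≤ b) :
    |log (a / b)|⁻¹ ≤ 2 := by
  refine (inv_abs_log_div_le ha hb).trans ?_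
  have hmax : max a b ≤ 2 * |a - b| := by
    rcases hab with h | h
    · rw [abs_of_nonneg (by linarith)]; exact max_le (by linarith) (by linarith)
    · rw [abs_sub_comm, abs_of_nonneg (by linarith)]; exact max_le (by linarith) (by linarith)
  rcases eq_or_ne a b with rfl | hne
  · simp
  rwa [div_le_iff₀ (abs_pos.mpr (sub_ne_zero.mpr hne))]

lemma inv_abs_log_div_le_of_le_two_mul {a b : ℝ} (ha : 0 < a) (hb : 0 < b) (hba : b ≤ 2 * a) :
    |log (a / b)|⁻¹ ≤ 2 * a / |a - b| :=
  (inv_abs_log_div_le ha hb).trans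
    (div_le_div_of_nonneg_right (max_le (by linarith) hba) (abs_nonneg _))

lemma rpow_neg_le_of_half_le {x y p : ℝ} (hx : 0 < x) (hy : x / 2 ≤ y) (hp : 0 ≤ p) :
    y ^ (-p) ≤ 2 ^ p * x ^ (-p) := by
  calc y ^ (-p) ≤ (x / 2) ^ (-p) := rpow_le_rpow_of_nonpos (by positivity) hy (by linarith)
    _ = 2 ^ p * x ^ (-p) := by
      rw [div_rpow hx.le zero_le_two, rpow_neg zero_le_two]
      field_simp

lemma inv_le_rpow_sub_one_mul_rpow_neg {k c p : ℝ} (hk : 0 < k) (hkc : k ≤ c) (hp : 1 ≤ p) :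
    k⁻¹ ≤ c ^ (p - 1) * k ^ (-p) := by
  calc k⁻¹ = k ^ (p - 1) * k ^ (-p) := by
        rw [← rpow_add hk, show p - 1 + -p = -1 by ring, rpow_neg_one]
    _ ≤ c ^ (p - 1) * k ^ (-p) := by gcongr

lemma summable_abs_natCast_sub_rpow_neg {p : ℝ} (hp : 1 < p) (c : ℤ) :
    Summable fun n : ℕ => |(n : ℝ) - c| ^ (-p) := by
  have hinj : Function.Injective fun n : ℕ => (n : ℤ) - c := fun m n h => by simpa using h
  simpa [Function.comp_def] using (summable_abs_int_rpow hp).comp_injective hinj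

lemma tsum_abs_natCast_sub_rpow_neg_le {p : ℝ} (hp : 1 < p) (c : ℤ) :
    ∑' n : ℕ, |(n : ℝ) - c| ^ (-p) ≤ ∑' m : ℤ, |(m : ℝ)| ^ (-p) := by
  refine Summable.tsum_le_tsum_of_inj (fun n : ℕ => (n : ℤ) - c) (fun m n h => by simpa using h)
    (fun _ _ => by positivity) (fun n => by simp) (summable_abs_natCast_sub_rpow_neg hp c)
    (summable_abs_int_rpow hp)

lemma mul_div_rpow_le {a x y α β : ℝ} (hx : 0 ≤ x) (hy : 0 < y) (ha : a ≤ y ^ α) :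
    a * (x / y) ^ β ≤ x ^ β * y ^ (α - β) := by
  rw [div_rpow hx hy.le, rpow_sub hy]
  calc a * (x ^ β / y ^ β) ≤ y ^ α * (x ^ β / y ^ β) := by gcongr
    _ = x ^ β * (y ^ α / y ^ β) := by ring

section Cases

variable {β p x T : ℝ}

lemma rpow_mul_rpow_neg_mul_inv_abs_log_le_of_far {y : ℝ} (hx : 0 < x) (hy : 0 < y)
    (hfar : 2 * y ≤ x ∨ 2 * x ≤ y) :
    x ^ β * y ^ (-p) * |log (x / y)|⁻¹ ≤ 2 * x ^ β * y ^ (-p) := by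
  have := inv_abs_log_div_le_two hx hy hfar
  calc x ^ β * y ^ (-p) * |log (x / y)|⁻¹ ≤ x ^ β * y ^ (-p) * 2 := by gcongr
    _ = 2 * x ^ β * y ^ (-p) := by ring

lemma rpow_mul_rpow_neg_mul_min_le_of_nearest {r : ℝ} (hp : 0 ≤ p) (hx : 0 < x) (hT : 0 ≤ T)
    (hr : x / 2 ≤ r) (hr' : r ≤ 2 * x) :
    x ^ β * r ^ (-p) * min T |log (x / r)|⁻¹
      ≤ 2 ^ (p + 1) * x ^ (β + 1 - p) * min (T / x) |x - r|⁻¹ := by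
  have hweight : min T |log (x / r)|⁻¹ ≤ 2 * x * min (T / x) |x - r|⁻¹ := by
    rw [mul_min_of_nonneg _ _ (by positivity)]
    refine min_le_min (by field_simp; linarith) ?_
    simpa only [div_eq_mul_inv] using
      inv_abs_log_div_le_of_le_two_mul hx (by linarith) hr'
  calc x ^ β * r ^ (-p) * min T |log (x / r)|⁻¹
      ≤ x ^ β * (2 ^ p * x ^ (-p)) * (2 * x * min (T / x) |x - r|⁻¹) := by
        gcongr
        exact rpow_neg_le_of_half_le hx hr hp
    _ = 2 ^ (p + 1) * x ^ (β + 1 - p) * min (T / x) |x - r|⁻¹ := by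
        rw [show β + 1 - p = β + -p + 1 by ring, rpow_add_one hx.ne', rpow_add hx, rpow_add two_pos,
          rpow_one]
        ring

lemma rpow_mul_rpow_neg_mul_inv_abs_log_le_of_near {y r : ℝ} (hp : 1 ≤ p) (hx : 0 < x)
    (hr : |x - r| ≤ 1 / 2) (hy : x / 2 ≤ y) (hy' : y ≤ 2 * x) (hyr : 1 ≤ |y - r|) :
    x ^ β * y ^ (-p) * |log (x / y)|⁻¹ ≤ 2 ^ (2 * p + 1) * x ^ β * |y - r| ^ (-p) := by
  set k := |y - r|
  have hk : 0 < k := by linarith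
  have hxy : k / 2 ≤ |x - y| := by
    have := abs_sub_le y x r
    rw [abs_sub_comm y x] at this
    linarith
  have hkx : k ≤ 2 * x := by
    have : |x - y| ≤ x := abs_le.mpr ⟨by linarith, by linarith⟩
    linarith
  have hweight : |log (x / y)|⁻¹ ≤ 4 * x * ((2 * x) ^ (p - 1) * k ^ (-p)) := by
    calc |log (x / y)|⁻¹ ≤ 2 * x / |x - y| :=
          inv_abs_log_div_le_of_le_two_mul hx (by linarith) hy'
      _ ≤ 2 * x / (k / 2) := by gcongr
      _ = 4 * x * k⁻¹ := by field_simp; ring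
      _ ≤ 4 * x * ((2 * x) ^ (p - 1) * k ^ (-p)) := by
          gcongr; exact inv_le_rpow_sub_one_mul_rpow_neg hk hkx hp
  calc x ^ β * y ^ (-p) * |log (x / y)|⁻¹
      ≤ x ^ β * (2 ^ p * x ^ (-p)) * (4 * x * ((2 * x) ^ (p - 1) * k ^ (-p))) := by
        gcongr
        exact rpow_neg_le_of_half_le hx hy (zero_le_one.trans hp)
    _ = 2 ^ (2 * p + 1) * x ^ β * k ^ (-p) := by
        rw [mul_rpow zero_le_two hx.le]
        have hx1 : x ^ (-p) * x * x ^ (p - 1) = 1 := by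
          rw [← rpow_add_one hx.ne', ← rpow_add hx]; ring_nf; exact rpow_zero x
        have h2 : (2 : ℝ) ^ (2 * p + 1) = 4 * 2 ^ p * 2 ^ (p - 1) := by
          rw [mul_assoc, ← rpow_add two_pos, show (2 : ℝ) * p + 1 = p + (p - 1) + 2 by ring,
            rpow_add two_pos, rpow_two]; ring
        rw [h2]
        linear_combination (4 * 2 ^ p * 2 ^ (p - 1) * x ^ β * k ^ (-p)) * hx1

end Cases

noncomputable def landauMajorant (β p x T : ℝ) (r n : ℕ) : ℝ :=
  2 * x ^ β * (n : ℝ) ^ (-p) + 2 ^ (2 * p + 1) * x ^ β * |(n : ℝ) - r| ^ (-p) +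
    if n = r then 2 ^ (p + 1) * x ^ (β + 1 - p) * min (T / x) |x - r|⁻¹ else 0

section Majorant

variable {β p x T : ℝ} {r : ℕ}

lemma landauMajorant_nonneg (hx : 0 ≤ x) (hT : 0 ≤ T) (n : ℕ) :
    0 ≤ landauMajorant β p x T r n := by
  unfold landauMajorant
  split_ifs <;> positivity

lemma rpow_mul_rpow_neg_mul_min_le_landauMajorant {n : ℕ} (hp : 1 ≤ p) (hx : 1 < x) (hT : 0 ≤ T)
    (hr : |x - r| ≤ 1 / 2) (hn : 0 < n) :
    x ^ β * (n : ℝ) ^ (-p) * min T |log (x / n)|⁻¹ ≤ landauMajorant β p x T r n := by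
  have hx0 : 0 < x := by linarith
  have hn0 : (0 : ℝ) < n := by exact_mod_cast hn
  have hmin : x ^ β * (n : ℝ) ^ (-p) * min T |log (x / n)|⁻¹
      ≤ x ^ β * (n : ℝ) ^ (-p) * |log (x / n)|⁻¹ :=
    mul_le_mul_of_nonneg_left (min_le_right _ _) (by positivity)
  unfold landauMajorant
  by_cases hfar : 2 * (n : ℝ) ≤ x ∨ 2 * x ≤ n
  · have := rpow_mul_rpow_neg_mul_inv_abs_log_le_of_far (β := β) (p := p) hx0 hn0 hfar
    have : 0 ≤ 2 ^ (2 * p + 1) * x ^ β * |(n : ℝ) - r| ^ (-p) := by positivity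
    have : 0 ≤ if n = r then 2 ^ (p + 1) * x ^ (β + 1 - p) * min (T / x) |x - r|⁻¹ else 0 := by
      split_ifs <;> positivity
    linarith
  push Not at hfar
  obtain ⟨hn_lo, hn_hi⟩ := hfar
  have hr_lo : x / 2 ≤ r := by linarith [(abs_le.mp hr).2]
  have hr_hi : (r : ℝ) ≤ 2 * x := by linarith [(abs_le.mp hr).1]
  by_cases hnr : n = r
  · subst hnr
    rw [if_pos rfl]
    have := rpow_mul_rpow_neg_mul_min_le_of_nearest (β := β) (zero_le_one.trans hp) hx0 hT
      hr_lo hr_hi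
    have : 0 ≤ 2 * x ^ β * (n : ℝ) ^ (-p) := by positivity
    have : 0 ≤ 2 ^ (2 * p + 1) * x ^ β * |(n : ℝ) - n| ^ (-p) := by positivity
    linarith
  · rw [if_neg hnr]
    have hnr' : (1 : ℝ) ≤ |(n : ℝ) - r| := by
      rcases Nat.lt_or_gt_of_ne hnr with h | h
      · have : (n : ℝ) + 1 ≤ r := by exact_mod_cast h
        rw [abs_of_neg (by linarith)]; linarith
      · have : (r : ℝ) + 1 ≤ n := by exact_mod_cast h
        rw [abs_of_pos (by linarith)]; linarith
    have := rpow_mul_rpow_neg_mul_inv_abs_log_le_of_near (β := β) hp hx0 hr (by linarith)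
      hn_hi.le hnr'
    have : 0 ≤ 2 * x ^ β * (n : ℝ) ^ (-p) := by positivity
    linarith

lemma summable_landauMajorant (hp : 1 < p) : Summable (landauMajorant β p x T r) := by
  have hpow : Summable fun n : ℕ => (n : ℝ) ^ (-p) := summable_nat_rpow.mpr (by linarith)
  have hshift : Summable fun n : ℕ => |(n : ℝ) - r| ^ (-p) := by
    simpa using summable_abs_natCast_sub_rpow_neg hp r
  exact ((hpow.mul_left _).add (hshift.mul_left _)).add
    (summable_of_ne_finset_zero (s := {r}) fun n hn => if_neg (by simpa using hn))

lemma tsum_landauMajorant_le (hp : 1 < p) (hx : 0 ≤ x) :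
    ∑' n, landauMajorant β p x T r n ≤
      (2 + 2 ^ (2 * p + 1)) * (∑' m : ℤ, |(m : ℝ)| ^ (-p)) * x ^ β
        + 2 ^ (p + 1) * x ^ (β + 1 - p) * min (T / x) |x - r|⁻¹ := by
  have hpow : Summable fun n : ℕ => (n : ℝ) ^ (-p) := summable_nat_rpow.mpr (by linarith)
  have hshift : Summable fun n : ℕ => |(n : ℝ) - r| ^ (-p) := by
    simpa using summable_abs_natCast_sub_rpow_neg hp r
  have hpow_le : ∑' n : ℕ, (n : ℝ) ^ (-p) ≤ ∑' m : ℤ, |(m : ℝ)| ^ (-p) := by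
    simpa using tsum_abs_natCast_sub_rpow_neg_le hp 0
  have hshift_le : ∑' n : ℕ, |(n : ℝ) - r| ^ (-p) ≤ ∑' m : ℤ, |(m : ℝ)| ^ (-p) := by
    simpa using tsum_abs_natCast_sub_rpow_neg_le hp r
  unfold landauMajorant
  rw [Summable.tsum_add ((hpow.mul_left _).add (hshift.mul_left _))
      (summable_of_ne_finset_zero (s := {r}) fun n hn => if_neg (by simpa using hn)),
    Summable.tsum_add (hpow.mul_left _) (hshift.mul_left _), tsum_mul_left, tsum_mul_left,
    tsum_ite_eq]
  have : 0 ≤ x ^ β := by positivity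
  nlinarith [mul_le_mul_of_nonneg_left hpow_le (by positivity : (0 : ℝ) ≤ 2 * x ^ β),
    mul_le_mul_of_nonneg_left hshift_le (by positivity : (0 : ℝ) ≤ 2 ^ (2 * p + 1) * x ^ β)]

end Majorant

theorem landau_sum_bound_general (σ ε : ℝ) (hε0 : 0 < ε) :
    ∃ C : ℝ, 0 < C ∧
      ∀ (x T : ℝ) (Λ' : ℕ → ℂ), 1 < x → (¬ ∃ m : ℤ, x = (m : ℝ)) → 1 < T →
        (∀ n : ℕ, 1 ≤ n → ‖Λ' n‖ ≤ (n : ℝ) ^ (σ - 1 + ε / 2)) →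
        (Summable fun n : {n : ℕ // 1 ≤ n} =>
            ‖Λ' n‖ * (x / (n : ℝ)) ^ (σ + ε)
              * min T (|Real.log (x / (n : ℝ))|⁻¹)) ∧
        (∑' n : {n : ℕ // 1 ≤ n},
            ‖Λ' n‖ * (x / (n : ℝ)) ^ (σ + ε)
              * min T (|Real.log (x / (n : ℝ))|⁻¹))
          ≤ C * (x ^ (σ + ε) + x ^ (σ + ε / 2) * min (T / x) (distNearestInt x)⁻¹) := by
  have hp : 1 < 1 + ε / 2 := by linarith
  set p := 1 + ε / 2
  set Z := ∑' m : ℤ, |(m : ℝ)| ^ (-p)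
  have hZ : 0 ≤ Z := tsum_nonneg fun _ => by positivity
  refine ⟨(2 + 2 ^ (2 * p + 1)) * Z + 2 ^ (p + 1), by positivity, ?_⟩
  intro x T Λ' hx _ hT hΛ
  have hx0 : 0 < x := by linarith
  obtain ⟨r, hr⟩ := exists_nat_distNearestInt_eq hx0.le
  have hterm (n : {n : ℕ // 1 ≤ n}) :
      ‖Λ' n‖ * (x / (n : ℝ)) ^ (σ + ε) * min T |log (x / n)|⁻¹
        ≤ landauMajorant (σ + ε) p x T r n := by
    have hn : (0 : ℝ) < n := by exact_mod_cast n.2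
    have hamp := mul_div_rpow_le (β := σ + ε) hx0.le hn (hΛ n n.2)
    rw [show σ - 1 + ε / 2 - (σ + ε) = -p by ring] at hamp
    exact (mul_le_mul_of_nonneg_right hamp (le_min (by linarith) (by positivity))).trans
      (rpow_mul_rpow_neg_mul_min_le_landauMajorant hp.le hx (by linarith)
        (hr ▸ abs_sub_round x) n.2)
  have hsum := summable_landauMajorant (β := σ + ε) (x := x) (T := T) (r := r) hp
  have hsummable : Summable fun n : {n : ℕ // 1 ≤ n} =>
      ‖Λ' n‖ * (x / (n : ℝ)) ^ (σ + ε) * min T |log (x / n)|⁻¹ :=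
    Summable.of_nonneg_of_le (fun n => by positivity) hterm
      (hsum.comp_injective Subtype.val_injective)
  refine ⟨hsummable, ?_⟩
  calc _ ≤ ∑' n, landauMajorant (σ + ε) p x T r n :=
        Summable.tsum_le_tsum_of_inj Subtype.val Subtype.val_injective
          (fun n _ => landauMajorant_nonneg hx0.le (by linarith) n) hterm hsummable hsum
    _ ≤ (2 + 2 ^ (2 * p + 1)) * Z * x ^ (σ + ε)
          + 2 ^ (p + 1) * x ^ (σ + ε + 1 - p) * min (T / x) |x - r|⁻¹ :=
        tsum_landauMajorant_le hp hx0.le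
    _ ≤ _ := by
        rw [show σ + ε + 1 - p = σ + ε / 2 by ring, ← hr]
        have hA : 0 ≤ (2 + 2 ^ (2 * p + 1)) * Z := by positivity
        have hX : 0 ≤ x ^ (σ + ε) := by positivity
        have hY : 0 ≤ x ^ (σ + ε / 2) * min (T / x) (distNearestInt x)⁻¹ :=
          mul_nonneg (by positivity)
            (le_min (div_nonneg (by linarith) hx0.le) (by rw [hr]; positivity))
        nlinarith [mul_nonneg hA hY, mul_nonneg (by positivity : (0 : ℝ) ≤ 2 ^ (p + 1)) hX]

theorem landau_sum_bound (σ ε : ℝ) (hσ : 1 ≤ σ) (hε0 : 0 < ε) (hε1 : ε < 1) :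
    ∃ C : ℝ, 0 < C ∧
      ∀ (x T : ℝ) (Λ' : ℕ → ℂ), 1 < x → (¬ ∃ m : ℤ, x = (m : ℝ)) → 1 < T →
        (∀ n : ℕ, 1 ≤ n → ‖Λ' n‖ ≤ (n : ℝ) ^ (σ - 1 + ε / 2)) →
        (Summable fun n : {n : ℕ // 1 ≤ n} =>
            ‖Λ' n‖ * (x / (n : ℝ)) ^ (σ + ε)
              * min T (|Real.log (x / (n : ℝ))|⁻¹)) ∧
        (∑' n : {n : ℕ // 1 ≤ n},
            ‖Λ' n‖ * (x / (n : ℝ)) ^ (σ + ε)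
              * min T (|Real.log (x / (n : ℝ))|⁻¹))
          ≤ C * (x ^ (σ + ε) + x ^ (σ + ε / 2) * min (T / x) (distNearestInt x)⁻¹) :=
  landau_sum_bound_general σ ε hε0
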